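/- arXiv:1107.5066 — 4 statements merged into one kernel-verified Lean document; each statement's English description precedes it below -/
import Mathlib

section
/- Let u ∈ (0,1] and let v(j) = a(j) − (c(j)/c(j+1))·a(j+1) for j = 1, 2, …. Then v(j) ≤ v(j+1) ≤ 0 for all j ≥ 1, and both inequalities are strict. (For u = 0 one has v(j) = 0 for all j, so the inequalities hold with equality if and only if u = 0.) -/
/-!
The cross terms cancel: `v j = -u (a (j+1) - a j) / c (j+1)`. The increments of `a` are positive and
strictly decreasing by concavity, while `c` is positive and nondecreasing, so `v` is negative and
strictly increasing.
-/

theorem StrictAnti.div_of_monotone {d c : ℕ → ℝ} (hd : StrictAnti d) (hd0 : ∀ j, 0 ≤ d j)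
    (hc : Monotone c) (hc0 : ∀ j, 0 < c j) : StrictAnti fun j => d j / c j :=
  fun _ _ hij => div_lt_div₀ (hd hij) (hc hij.le) (hd0 _) (hc0 _)

theorem sub_affine_div_mul_eq {x y u : ℝ} (h : y * (1 - u) + u ≠ 0) :
    x - (x * (1 - u) + u) / (y * (1 - u) + u) * y = -(u * ((y - x) / (y * (1 - u) + u))) := by
  rw [div_mul_eq_mul_div, ← mul_div_assoc, sub_div' h, ← neg_div, div_left_inj' h]
  ring

theorem mul_one_sub_add_pos {x u : ℝ} (hx : 0 ≤ x) (hu0 : 0 < u) (hu1 : u ≤ 1) : 0 < x * (1 - u) + u := by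
  have : 0 ≤ x * (1 - u) := mul_nonneg hx (by linarith)
  linarith

theorem fighter_v_strict_general
    (a : ℕ → ℝ) (haI : ∀ j, a j ∈ Set.Icc (0:ℝ) 1)
    (hmono : StrictMono a)
    (hconc : ∀ j : ℕ, a (j + 2) - a (j + 1) < a (j + 1) - a j)
    (u : ℝ) (hu0 : 0 < u) (hu1 : u ≤ 1)
    (c : ℕ → ℝ) (hc : ∀ j, c j = a j * (1 - u) + u)
    (v : ℕ → ℝ) (hv : ∀ j, 1 ≤ j → v j = a j - (c j / c (j + 1)) * a (j + 1)) :
    (∀ j, 1 ≤ j → v j < v (j + 1)) ∧ (∀ j, 1 ≤ j → v j < 0) := by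
  have hc_pos j : 0 < c j := hc j ▸ mul_one_sub_add_pos (haI j).1 hu0 hu1
  have hc_mono : Monotone c := fun i j hij => by
    rw [hc, hc]
    exact add_le_add_left (mul_le_mul_of_nonneg_right (hmono.monotone hij) (by linarith)) u
  have hv_eq j (hj : 1 ≤ j) : v j = -(u * ((a (j + 1) - a j) / c (j + 1))) := by
    rw [hv j hj, hc j, hc (j + 1), sub_affine_div_mul_eq (hc (j + 1) ▸ (hc_pos _).ne')]
  have hinc_pos j : 0 < a (j + 1) - a j := sub_pos.2 (hmono j.lt_succ_self)
  have hq : StrictAnti fun j => (a (j + 1) - a j) / c (j + 1) :=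
    (strictAnti_nat_of_succ_lt hconc).div_of_monotone (fun j => (hinc_pos j).le)
      (fun _ _ hij => hc_mono (Nat.succ_le_succ hij)) (fun _ => hc_pos _)
  refine ⟨fun j hj => ?_, fun j hj => ?_⟩
  · rw [hv_eq j hj, hv_eq (j + 1) (by omega)]
    exact neg_lt_neg (mul_lt_mul_of_pos_left (hq j.lt_succ_self) hu0)
  · rw [hv_eq j hj]
    exact neg_neg_of_pos (mul_pos hu0 (div_pos (hinc_pos j) (hc_pos _)))

/-- Lemma 3.1: for `u ∈ (0,1]`, with `c(j) = a(j)(1-u)+u` and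
`v(j) = a(j) - (c(j)/c(j+1))·a(j+1)`, one has `v(j) < v(j+1) < 0` for all `j ≥ 1`. -/
theorem fighter_v_strict
    (a : ℕ → ℝ) (haI : ∀ j, a j ∈ Set.Icc (0:ℝ) 1) (ha0 : a 0 = 0)
    (hmono : StrictMono a)
    (hconc : ∀ j : ℕ, a (j + 2) - a (j + 1) < a (j + 1) - a j)
    (u : ℝ) (hu0 : 0 < u) (hu1 : u ≤ 1)
    (c : ℕ → ℝ) (hc : ∀ j, c j = a j * (1 - u) + u)
    (v : ℕ → ℝ) (hv : ∀ j, 1 ≤ j → v j = a j - (c j / c (j + 1)) * a (j + 1)) :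
    (∀ j, 1 ≤ j → v j < v (j + 1)) ∧ (∀ j, 1 ≤ j → v j < 0) :=
  fighter_v_strict_general a haI hmono hconc u hu0 hu1 c hc v hv
end

section
/- Property [C] holds for the general Fighter problem: for every u ∈ [0,1], every n ≥ 1 and every t ≥ 0, K(n+1,t) ≤ K(n,t) + 1; equivalently, n − K(n,t) is non-decreasing in n for each fixed t. -/
open Real MeasureTheory Filter Topology

/-- Auxiliary history-based recursion: `Nhist a u n m t` equals `N(m,t)` when `m ≤ n`. -/
noncomputable def Nhist (a : ℕ → ℝ) (u : ℝ) : ℕ → ℕ → ℝ → ℝ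
  | 0, _, _ => 0
  | n + 1, m, t =>
      if m ≤ n then Nhist a u n m t
      else (Finset.Icc 1 (n + 1)).sup'
          (Finset.nonempty_Icc.mpr (Nat.succ_le_succ (Nat.zero_le n)))
          (fun j => a j + (a j * (1 - u) + u) *
            (Real.exp (-t) * ∫ x in (0:ℝ)..t, Nhist a u n (n + 1 - j) x * Real.exp x))

/-- `Nval a u n t` is `N(n,t)`, the optimal expected number of enemy planes shot down,
with `N(0,t) = 0` and `N(n,t) = max_{1 ≤ j ≤ n} N_n(j,t)`. -/
noncomputable def Nval (a : ℕ → ℝ) (u : ℝ) (n : ℕ) (t : ℝ) : ℝ :=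
  Nhist a u n n t

/-- `Nstar a u r t` is `N*(r,t) = e^{-t} ∫_0^t N(r,x) e^x dx` (so `N*(0,t) = 0`). -/
noncomputable def Nstar (a : ℕ → ℝ) (u : ℝ) (r : ℕ) (t : ℝ) : ℝ :=
  Real.exp (-t) * ∫ x in (0:ℝ)..t, Nval a u r x * Real.exp x

/-- `Nalloc a u n j t` is `N_n(j,t) = a(j) + c(j)·N*(n-j,t)` where `c(j) = a(j)(1-u)+u`. -/
noncomputable def Nalloc (a : ℕ → ℝ) (u : ℝ) (n j : ℕ) (t : ℝ) : ℝ :=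
  a j + (a j * (1 - u) + u) * Nstar a u (n - j) t

/-- `Kopt a u n t = min { j ∈ {1,…,n} : N_n(j,t) = N(n,t) }`. -/
noncomputable def Kopt (a : ℕ → ℝ) (u : ℝ) (n : ℕ) (t : ℝ) : ℕ :=
  sInf {j : ℕ | 1 ≤ j ∧ j ≤ n ∧ Nalloc a u n j t = Nval a u n t}

/-!
With `Δa j = a (j + 1) - a j`, one has the exact identity
`N_{n+1}(j+1,t) = N_n(j,t) + Δa j · (1 + (1 - u) N*(n-j,t))`.
Concavity makes `Δa j` antitone, and monotonicity of `N` in the number of planes makes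
`N*(n-j,t)` antitone in `j`, so the gain `N_{n+1}(j+1,t) - N_n(j,t)` is antitone in `j`.
Hence if `k = K(n,t)` and some `i + 1 > k + 1` were optimal for `n + 1`, then `N_n(i) ≤ N_n(k)`
together with the smaller gain at `i` makes `k + 1` optimal for `n + 1` as well.
-/

section Fighter

variable {a : ℕ → ℝ} {u : ℝ}

lemma Nhist_eq_Nval {n m : ℕ} (hm : m ≤ n) (t : ℝ) : Nhist a u n m t = Nval a u m t := by
  induction n with
  | zero => obtain rfl := Nat.le_zero.mp hm; rfl
  | succ n ih =>
    rcases hm.lt_or_eq with hlt | rfl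
    · have hmn : m ≤ n := Nat.lt_succ_iff.mp hlt
      rw [Nhist, if_pos hmn, ih hmn]
    · rfl

lemma Nval_succ (n : ℕ) (t : ℝ) :
    Nval a u (n + 1) t = (Finset.Icc 1 (n + 1)).sup'
      (Finset.nonempty_Icc.mpr (Nat.succ_le_succ (Nat.zero_le n)))
      (fun j => Nalloc a u (n + 1) j t) := by
  rw [Nval, Nhist, if_neg (Nat.not_succ_le_self n)]
  refine Finset.sup'_congr _ rfl fun j hj => ?_
  have hsub : n + 1 - j ≤ n := by have := (Finset.mem_Icc.mp hj).1; omega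
  simp only [Nalloc, Nstar, Nhist_eq_Nval hsub]

lemma Nalloc_le_Nval {n j : ℕ} (hj : 1 ≤ j) (hjn : j ≤ n) (t : ℝ) :
    Nalloc a u n j t ≤ Nval a u n t := by
  obtain ⟨m, rfl⟩ := Nat.exists_eq_add_of_le' (hj.trans hjn)
  rw [Nval_succ]
  exact Finset.le_sup' (fun j => Nalloc a u (m + 1) j t) (Finset.mem_Icc.mpr ⟨hj, hjn⟩)

lemma exists_Nalloc_eq_Nval {n : ℕ} (hn : 1 ≤ n) (t : ℝ) :
    ∃ j, 1 ≤ j ∧ j ≤ n ∧ Nalloc a u n j t = Nval a u n t := by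
  obtain ⟨m, rfl⟩ := Nat.exists_eq_add_of_le' hn
  obtain ⟨j, hj, hmax⟩ := Finset.exists_mem_eq_sup' _ (fun j => Nalloc a u (m + 1) j t)
  exact ⟨j, (Finset.mem_Icc.mp hj).1, (Finset.mem_Icc.mp hj).2, by rw [Nval_succ, hmax]⟩

lemma Kopt_spec {n : ℕ} (hn : 1 ≤ n) (t : ℝ) :
    1 ≤ Kopt a u n t ∧ Kopt a u n t ≤ n ∧ Nalloc a u n (Kopt a u n t) t = Nval a u n t :=
  Nat.sInf_mem (exists_Nalloc_eq_Nval hn t)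

lemma Kopt_le {n j : ℕ} {t : ℝ} (hj : 1 ≤ j) (hjn : j ≤ n)
    (hopt : Nalloc a u n j t = Nval a u n t) : Kopt a u n t ≤ j :=
  Nat.sInf_le ⟨hj, hjn, hopt⟩

lemma Nstar_zero (t : ℝ) : Nstar a u 0 t = 0 := by
  simp [Nstar, Nval, Nhist]

lemma continuous_Nval (n : ℕ) : Continuous (Nval a u n) := by
  induction n using Nat.strong_induction_on with
  | _ n ih =>
    rcases n with _ | m
    · exact continuous_const
    rw [funext (Nval_succ m)]
    refine Continuous.finset_sup'_apply _ fun j hj => ?_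
    have hlt : m + 1 - j < m + 1 := by have := (Finset.mem_Icc.mp hj).1; omega
    have hprim : Continuous fun t => ∫ x in (0:ℝ)..t, Nval a u (m + 1 - j) x * Real.exp x :=
      intervalIntegral.continuous_primitive
        (fun _ _ => ((ih _ hlt).mul Real.continuous_exp).intervalIntegrable _ _) 0
    unfold Nalloc Nstar
    fun_prop

lemma Nstar_le_Nstar {r r' : ℕ} {t : ℝ} (ht : 0 ≤ t)
    (h : ∀ x ∈ Set.Icc 0 t, Nval a u r x ≤ Nval a u r' x) :
    Nstar a u r t ≤ Nstar a u r' t := by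
  unfold Nstar
  refine mul_le_mul_of_nonneg_left ?_ (Real.exp_nonneg _)
  refine intervalIntegral.integral_mono_on ht
    (((continuous_Nval r).mul Real.continuous_exp).intervalIntegrable 0 t)
    (((continuous_Nval r').mul Real.continuous_exp).intervalIntegrable 0 t) fun x hx => ?_
  exact mul_le_mul_of_nonneg_right (h x hx) (Real.exp_nonneg _)

lemma allocation_factor_nonneg (ha : ∀ j, 0 ≤ a j) (hu : u ∈ Set.Icc (0:ℝ) 1) (j : ℕ) : 0 ≤ a j * (1 - u) + u := by
  nlinarith [ha j, hu.1, hu.2]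

lemma Nval_le_Nval_succ (ha : ∀ j, 0 ≤ a j) (hu : u ∈ Set.Icc (0:ℝ) 1) (n : ℕ) {t : ℝ} (ht : 0 ≤ t) : Nval a u n t ≤ Nval a u (n + 1) t := by
  induction n using Nat.strong_induction_on generalizing t with
  | _ n ih =>
    rcases n with _ | m
    · calc Nval a u 0 t = 0 := rfl
        _ ≤ Nalloc a u 1 1 t := by simp [Nalloc, Nstar_zero, ha 1]
        _ ≤ Nval a u 1 t := Nalloc_le_Nval le_rfl le_rfl t
    obtain ⟨j, hj, hjm, hopt⟩ := exists_Nalloc_eq_Nval (a := a) (u := u) (Nat.succ_pos m) t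
    have hsub : m + 2 - j = m + 1 - j + 1 := by omega
    have hNstar : Nstar a u (m + 1 - j) t ≤ Nstar a u (m + 2 - j) t := by
      rw [hsub]
      exact Nstar_le_Nstar ht fun x hx => ih _ (by omega) hx.1
    calc Nval a u (m + 1) t = Nalloc a u (m + 1) j t := hopt.symm
      _ ≤ Nalloc a u (m + 2) j t := by
        unfold Nalloc
        gcongr
        exact allocation_factor_nonneg ha hu j
      _ ≤ Nval a u (m + 2) t := Nalloc_le_Nval hj (by omega) t

lemma monotone_Nstar (ha : ∀ j, 0 ≤ a j) (hu : u ∈ Set.Icc (0:ℝ) 1) {t : ℝ} (ht : 0 ≤ t) : Monotone fun r => Nstar a u r t :=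
  monotone_nat_of_le_succ fun r =>
    Nstar_le_Nstar ht fun _ hx => Nval_le_Nval_succ ha hu r hx.1

lemma Nstar_nonneg (ha : ∀ j, 0 ≤ a j) (hu : u ∈ Set.Icc (0:ℝ) 1) (r : ℕ) {t : ℝ} (ht : 0 ≤ t) : 0 ≤ Nstar a u r t :=
  Nstar_zero (a := a) (u := u) t ▸ monotone_Nstar ha hu ht (Nat.zero_le r)

lemma Nalloc_succ_succ (n j : ℕ) (t : ℝ) :
    Nalloc a u (n + 1) (j + 1) t =
      Nalloc a u n j t + (a (j + 1) - a j) * (1 + (1 - u) * Nstar a u (n - j) t) := by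
  rw [Nalloc, Nalloc, Nat.add_sub_add_right]
  ring

lemma Nalloc_succ_succ_le_of_le (ha : ∀ j, 0 ≤ a j) (hmono : Monotone a)
    (hconc : Antitone fun j => a (j + 1) - a j) (hu : u ∈ Set.Icc (0:ℝ) 1)
    {n k i : ℕ} (hki : k ≤ i) {t : ℝ} (ht : 0 ≤ t)
    (hle : Nalloc a u n i t ≤ Nalloc a u n k t) :
    Nalloc a u (n + 1) (i + 1) t ≤ Nalloc a u (n + 1) (k + 1) t := by
  have hNstar : Nstar a u (n - i) t ≤ Nstar a u (n - k) t :=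
    monotone_Nstar ha hu ht (Nat.sub_le_sub_left hki n)
  have hgain : (a (i + 1) - a i) * (1 + (1 - u) * Nstar a u (n - i) t)
      ≤ (a (k + 1) - a k) * (1 + (1 - u) * Nstar a u (n - k) t) :=
    mul_le_mul (hconc hki)
      (by gcongr; linarith [hu.2])
      (by nlinarith [hu.2, Nstar_nonneg ha hu (n - i) ht])
      (sub_nonneg.mpr (hmono k.le_succ))
  rw [Nalloc_succ_succ, Nalloc_succ_succ]
  linarith

end Fighter

theorem fighter_C_general
    (a : ℕ → ℝ) (haI : ∀ j, a j ∈ Set.Icc (0:ℝ) 1)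
    (hmono : StrictMono a)
    (hconc : ∀ j : ℕ, a (j + 2) - a (j + 1) < a (j + 1) - a j)
    (u : ℝ) (hu : u ∈ Set.Icc (0:ℝ) 1) :
    ∀ n : ℕ, 1 ≤ n → ∀ t : ℝ, 0 ≤ t →
      Kopt a u (n + 1) t ≤ Kopt a u n t + 1 := by
  intro n hn t ht
  obtain ⟨hk, hkn, hkopt⟩ := Kopt_spec (a := a) (u := u) hn t
  obtain ⟨j, hj, hjn, hjopt⟩ := exists_Nalloc_eq_Nval (a := a) (u := u) (Nat.succ_pos n) t
  rcases le_or_gt j (Kopt a u n t + 1) with hjk | hkj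
  · exact (Kopt_le hj hjn hjopt).trans hjk
  obtain ⟨i, rfl⟩ : ∃ i, j = i + 1 := ⟨j - 1, by omega⟩
  have hgap : Nalloc a u (n + 1) (i + 1) t ≤ Nalloc a u (n + 1) (Kopt a u n t + 1) t :=
    Nalloc_succ_succ_le_of_le (fun j => (haI j).1) hmono.monotone
      (antitone_nat_of_succ_le fun j => (hconc j).le) hu (by omega) ht
      (hkopt ▸ Nalloc_le_Nval (by omega) (by omega) t)
  exact Kopt_le (by omega) (by omega)
    (le_antisymm (Nalloc_le_Nval (by omega) (by omega) t) (hjopt ▸ hgap))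

/-- Theorem 3.1 ([C]): for every `u ∈ [0,1]`, `n ≥ 1` and `t ≥ 0`,
`K(n+1,t) ≤ K(n,t) + 1`. -/
theorem fighter_C
    (a : ℕ → ℝ) (haI : ∀ j, a j ∈ Set.Icc (0:ℝ) 1) (ha0 : a 0 = 0)
    (hmono : StrictMono a)
    (hconc : ∀ j : ℕ, a (j + 2) - a (j + 1) < a (j + 1) - a j)
    (u : ℝ) (hu : u ∈ Set.Icc (0:ℝ) 1) :
    ∀ n : ℕ, 1 ≤ n → ∀ t : ℝ, 0 ≤ t →
      Kopt a u (n + 1) t ≤ Kopt a u n t + 1 :=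
  fighter_C_general a haI hmono hconc u hu
end

section
/- For the Invincible Fighter (u = 1) and any n ≥ 2: if t ↦ N(s,t) − N(s−1,t) is non-decreasing on [0,∞) for every s = 1, …, n−1, then for every j = 1, …, n−1 the function t ↦ N_n(j,t) − N_n(j+1,t) is strictly increasing on [0,∞). -/
open Real MeasureTheory Filter Topology

lemma nhist_continuous (a : ℕ → ℝ) (u : ℝ) : ∀ n m, Continuous (fun t => Nhist a u n m t) := by
  intro n
  induction n with
  | zero => intro m; simpa [Nhist] using continuous_const
  | succ n ih =>
    intro m
    by_cases h : m ≤ n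
    · simpa [Nhist, h] using ih m
    · have : (fun t => Nhist a u (n+1) m t) =
        fun t => (Finset.Icc 1 (n + 1)).sup'
          (Finset.nonempty_Icc.mpr (Nat.succ_le_succ (Nat.zero_le n)))
          (fun j => a j + (a j * (1 - u) + u) *
            (Real.exp (-t) * ∫ x in (0:ℝ)..t, Nhist a u n (n + 1 - j) x * Real.exp x)) := by
        funext t; simp [Nhist, h]
      rw [this]
      apply Continuous.finset_sup'_apply
      intro i _
      have hint : Continuous fun t => ∫ x in (0:ℝ)..t, Nhist a u n (n + 1 - i) x * Real.exp x :=
        intervalIntegral.continuous_primitive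
          (fun c d => ((ih (n+1-i)).mul continuous_exp).intervalIntegrable c d) 0
      exact continuous_const.add (continuous_const.mul
        (((continuous_neg.rexp)).mul hint))

lemma nhist_zero (a : ℕ → ℝ) (u : ℝ) (ha0 : a 0 = 0) (hmono : Monotone a) :
    ∀ n m, m ≤ n → Nhist a u n m 0 = a m := by
  intro n
  induction n with
  | zero => intro m hm; interval_cases m; simp [Nhist, ha0]
  | succ n ih =>
    intro m hm
    by_cases h : m ≤ n
    · simp [Nhist, h, ih m h]
    · have hm' : m = n + 1 := by omega
      subst hm'
      have : Nhist a u (n+1) (n+1) 0 = (Finset.Icc 1 (n + 1)).sup'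
          (Finset.nonempty_Icc.mpr (Nat.succ_le_succ (Nat.zero_le n)))
          (fun j => a j) := by
        simp [Nhist, intervalIntegral.integral_same]
      rw [this]
      apply le_antisymm
      · apply Finset.sup'_le
        intro j hj
        exact hmono (Finset.mem_Icc.mp hj).2
      · exact Finset.le_sup' (fun j => a j) (Finset.mem_Icc.mpr ⟨Nat.succ_le_succ (Nat.zero_le n), le_rfl⟩)

theorem aux_main
    (a : ℕ → ℝ) (ha0 : a 0 = 0) (hmono : StrictMono a)
    (n : ℕ)
    (hyp : ∀ s : ℕ, 1 ≤ s → s + 1 ≤ n →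
      MonotoneOn (fun t => Nhist a 1 s s t - Nhist a 1 (s-1) (s-1) t) (Set.Ici (0:ℝ))) :
    ∀ j : ℕ, 1 ≤ j → j + 1 ≤ n →
      StrictMonoOn (fun t =>
        (a j + Real.exp (-t) * ∫ x in (0:ℝ)..t, Nhist a 1 (n-j) (n-j) x * Real.exp x)
        - (a (j+1) + Real.exp (-t) * ∫ x in (0:ℝ)..t, Nhist a 1 (n-(j+1)) (n-(j+1)) x * Real.exp x))
        (Set.Ici (0:ℝ)) := by
  intro j hj hjn
  set r := n - j with hr
  have hr1 : 1 ≤ r := by omega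
  have hr2 : r + 1 ≤ n := by omega
  have hrj : n - (j + 1) = r - 1 := by omega
  set f : ℝ → ℝ := fun x => Nhist a 1 r r x - Nhist a 1 (r-1) (r-1) x with hf
  have hfmono : MonotoneOn f (Set.Ici (0:ℝ)) := hyp r hr1 hr2
  have hfcont : Continuous f := (nhist_continuous a 1 r r).sub (nhist_continuous a 1 (r-1) (r-1))
  have hf0 : 0 < f 0 := by
    have h1 : Nhist a 1 r r 0 = a r := nhist_zero a 1 ha0 hmono.monotone r r le_rfl
    have h2 : Nhist a 1 (r-1) (r-1) 0 = a (r-1) := nhist_zero a 1 ha0 hmono.monotone (r-1) (r-1) le_rfl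
    simp only [hf, h1, h2, sub_pos]
    exact hmono (by omega)
  intro s hs t ht hst
  simp only [Set.mem_Ici] at hs ht
  have hfs : 0 < f s := lt_of_lt_of_le hf0 (hfmono (Set.mem_Ici.mpr le_rfl) (Set.mem_Ici.mpr hs) hs)
  have hintr : ∀ (m : ℕ) (c d : ℝ), IntervalIntegrable (fun x => Nhist a 1 m m x * Real.exp x) volume c d :=
    fun m c d => ((nhist_continuous a 1 m m).mul continuous_exp).intervalIntegrable c d
  have key : ∀ w : ℝ,
      (Real.exp (-w) * ∫ x in (0:ℝ)..w, Nhist a 1 r r x * Real.exp x)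
      - (Real.exp (-w) * ∫ x in (0:ℝ)..w, Nhist a 1 (r-1) (r-1) x * Real.exp x)
      = Real.exp (-w) * ∫ x in (0:ℝ)..w, f x * Real.exp x := by
    intro w
    rw [← mul_sub, ← intervalIntegral.integral_sub (hintr r 0 w) (hintr (r-1) 0 w)]
    simp only [hf, sub_mul]
  have hFint : ∀ c d : ℝ, IntervalIntegrable (fun x => f x * Real.exp x) volume c d :=
    fun c d => (hfcont.mul continuous_exp).intervalIntegrable c d
  rw [hrj]
  have goal2 : Real.exp (-s) * (∫ x in (0:ℝ)..s, f x * Real.exp x)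
      < Real.exp (-t) * ∫ x in (0:ℝ)..t, f x * Real.exp x := by
    set A := ∫ x in (0:ℝ)..s, f x * Real.exp x with hA
    set B := ∫ x in s..t, f x * Real.exp x with hB
    have hsplit : (∫ x in (0:ℝ)..t, f x * Real.exp x) = A + B :=
      (intervalIntegral.integral_add_adjacent_intervals (hFint 0 s) (hFint s t)).symm
    have hAle : A ≤ f s * (Real.exp s - 1) := by
      have : A ≤ ∫ x in (0:ℝ)..s, f s * Real.exp x := by
        apply intervalIntegral.integral_mono_on hs (hFint 0 s)
          ((continuous_const.mul continuous_exp).intervalIntegrable 0 s)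
        intro x hx
        exact mul_le_mul_of_nonneg_right
          (hfmono (Set.mem_Ici.mpr hx.1) (Set.mem_Ici.mpr hs) hx.2) (Real.exp_pos x).le
      rwa [intervalIntegral.integral_const_mul, integral_exp, Real.exp_zero] at this
    have hBge : f s * (Real.exp t - Real.exp s) ≤ B := by
      have : (∫ x in s..t, f s * Real.exp x) ≤ B := by
        apply intervalIntegral.integral_mono_on hst.le
          ((continuous_const.mul continuous_exp).intervalIntegrable s t) (hFint s t)
        intro x hx
        exact mul_le_mul_of_nonneg_right
          (hfmono (Set.mem_Ici.mpr hs) (Set.mem_Ici.mpr (hs.trans hx.1)) hx.1) (Real.exp_pos x).le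
      rwa [intervalIntegral.integral_const_mul, integral_exp] at this
    rw [hsplit, Real.exp_neg, Real.exp_neg, inv_mul_eq_div, inv_mul_eq_div,
      div_lt_div_iff₀ (Real.exp_pos s) (Real.exp_pos t)]
    have hPQ : Real.exp s < Real.exp t := Real.exp_lt_exp.mpr hst
    have hP1 : 1 ≤ Real.exp s := Real.one_le_exp hs
    nlinarith [mul_le_mul_of_nonneg_left hAle (sub_pos.mpr hPQ).le,
      mul_le_mul_of_nonneg_left hBge (Real.exp_pos s).le,
      mul_pos (sub_pos.mpr hPQ) hfs]
  have e1 := key s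
  have e2 := key t
  dsimp only
  linarith [e1, e2]


/-- Lemma 4.2 (Invincible Fighter, `u = 1`): if `t ↦ N(s,t) - N(s-1,t)` is non-decreasing
on `[0,∞)` for every `s = 1,…,n-1`, then `t ↦ N_n(j,t) - N_n(j+1,t)` is strictly
increasing on `[0,∞)` for every `j = 1,…,n-1`. -/
theorem invincible_strict_increase
    (a : ℕ → ℝ) (haI : ∀ j, a j ∈ Set.Icc (0:ℝ) 1) (ha0 : a 0 = 0)
    (hmono : StrictMono a)
    (hconc : ∀ j : ℕ, a (j + 2) - a (j + 1) < a (j + 1) - a j)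
    (n : ℕ) (hn : 2 ≤ n)
    (hyp : ∀ s : ℕ, 1 ≤ s → s + 1 ≤ n →
      MonotoneOn (fun t => Nval a 1 s t - Nval a 1 (s - 1) t) (Set.Ici (0:ℝ))) :
    ∀ j : ℕ, 1 ≤ j → j + 1 ≤ n →
      StrictMonoOn (fun t => Nalloc a 1 n j t - Nalloc a 1 n (j + 1) t) (Set.Ici (0:ℝ)) := by
  intro j hj hjn
  have H := aux_main a ha0 hmono n hyp j hj hjn
  have heq : (fun t => Nalloc a 1 n j t - Nalloc a 1 n (j+1) t) =
      (fun t =>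
        (a j + Real.exp (-t) * ∫ x in (0:ℝ)..t, Nhist a 1 (n-j) (n-j) x * Real.exp x)
        - (a (j+1) + Real.exp (-t) * ∫ x in (0:ℝ)..t, Nhist a 1 (n-(j+1)) (n-(j+1)) x * Real.exp x)) := by
    funext t
    simp only [Nalloc, Nstar, Nval]
    ring
  rw [heq]
  exact H
end

section
/- Fix n ≥ 1 and let f(i,t), i = 1, …, n, be positive continuous functions of t ∈ [0,∞) such that f(i,t)/f(i+1,t) is non-decreasing in t for each i = 1, …, n−1. Define K(n,t) = min{ j ∈ {1,…,n} : f(j,t) = max_{i=1,…,n} f(i,t) }. Then t ↦ K(n,t) is non-increasing and right continuous. -/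
/-!
If `j` beats every later index at time `s`, i.e. `f i s ≤ f j s` for `j ≤ i ≤ n`, then it
still does at every later time `t`, because `f j / f i` is a product of consecutive ratios and
hence non-decreasing. Applied to `j = K s` this forces `K t ≤ K s`. For right continuity at `t`,
the indices below `k = K t` are strictly beaten by `k` at `t`, hence, by continuity, on some
`[t, t + ε)`, while the indices above `k` stay beaten by the persistence just described; so
`K = k` there.
-/

open Set Filter Topology

section RatioChain

variable {α 𝕜 : Type*} [Preorder α] [Field 𝕜] [LinearOrder 𝕜] [IsStrictOrderedRing 𝕜]
  {S : Set α}

theorem monotoneOn_div_of_monotoneOn_div_succ {g : ℕ → α → 𝕜} {a b : ℕ} (hab : a ≤ b)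
    (hpos : ∀ i, a ≤ i → i ≤ b → ∀ t ∈ S, 0 < g i t)
    (hratio : ∀ i, a ≤ i → i < b → MonotoneOn (fun t => g i t / g (i + 1) t) S) :
    MonotoneOn (fun t => g a t / g b t) S := by
  induction b, hab using Nat.le_induction with
  | base =>
    intro s hs t ht _
    simp only [div_self (hpos a le_rfl le_rfl s hs).ne', div_self (hpos a le_rfl le_rfl t ht).ne',
      le_refl]
  | succ b hab ih =>
    have hchain : MonotoneOn (fun t => g a t / g b t * (g b t / g (b + 1) t)) S :=
      (ih (fun i hai hib => hpos i hai (by omega)) (fun i hai hib => hratio i hai (by omega))).mul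
        (hratio b hab (by omega))
        (fun t ht => (div_pos (hpos a le_rfl (by omega) t ht) (hpos b hab (by omega) t ht)).le)
        (fun t ht => (div_pos (hpos b hab (by omega) t ht) (hpos _ (by omega) le_rfl t ht)).le)
    exact hchain.congr fun t ht => div_mul_div_cancel₀ (hpos b hab (by omega) t ht).ne'

theorem le_of_le_of_monotoneOn_div {u w : α → 𝕜} (hw : ∀ t ∈ S, 0 < w t)
    (hmono : MonotoneOn (fun t => u t / w t) S) {s t : α} (hs : s ∈ S) (ht : t ∈ S)
    (hst : s ≤ t) (hle : w s ≤ u s) : w t ≤ u t := by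
  have hratio_s : 1 ≤ u s / w s := (one_le_div (hw s hs)).mpr hle
  exact (one_le_div (hw t ht)).mp (hratio_s.trans (hmono hs ht hst))

theorem tail_le_of_tail_le_of_le {n j : ℕ} {f : ℕ → α → 𝕜}
    (hpos : ∀ i, 1 ≤ i → i ≤ n → ∀ t ∈ S, 0 < f i t)
    (hratio : ∀ i, 1 ≤ i → i + 1 ≤ n → MonotoneOn (fun t => f i t / f (i + 1) t) S)
    (hj : 1 ≤ j) {s t : α} (hs : s ∈ S) (ht : t ∈ S) (hst : s ≤ t)
    (htail : ∀ i, j ≤ i → i ≤ n → f i s ≤ f j s) :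
    ∀ i, j ≤ i → i ≤ n → f i t ≤ f j t := fun i hji hin =>
  le_of_le_of_monotoneOn_div (hpos i (hj.trans hji) hin)
    (monotoneOn_div_of_monotoneOn_div_succ hji
      (fun l hjl hli => hpos l (hj.trans hjl) (hli.trans hin))
      (fun l hjl hli => hratio l (hj.trans hjl) (by omega)))
    hs ht hst (htail i hji hin)

end RatioChain

def IsMaxIndex {β : Type*} [Preorder β] (n : ℕ) (v : ℕ → β) (j : ℕ) : Prop :=
  1 ≤ j ∧ j ≤ n ∧ ∀ i, 1 ≤ i → i ≤ n → v i ≤ v j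

section MaxIndex

variable {β : Type*} [LinearOrder β] {n : ℕ} {v : ℕ → β} {k : ℕ}

theorem IsLeast.lt_of_isMaxIndex (hk : IsLeast {j | IsMaxIndex n v j} k) {i : ℕ} (hi : 1 ≤ i)
    (hik : i < k) : v i < v k := by
  by_contra! hki
  exact hik.not_ge (hk.2 ⟨hi, hik.le.trans hk.1.2.1, fun l hl hln => (hk.1.2.2 l hl hln).trans hki⟩)

theorem isLeast_isMaxIndex_of_lt_of_le (hk : 1 ≤ k) (hkn : k ≤ n)
    (hbelow : ∀ i, 1 ≤ i → i < k → v i < v k) (habove : ∀ i, k ≤ i → i ≤ n → v i ≤ v k) :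
    IsLeast {j | IsMaxIndex n v j} k := by
  refine ⟨⟨hk, hkn, fun i hi hin => ?_⟩, fun j hj => ?_⟩
  · rcases lt_or_ge i k with hik | hki
    · exact (hbelow i hi hik).le
    · exact habove i hki hin
  · by_contra! hjk
    exact (hbelow j hj.1 hjk).not_ge (hj.2.2 k hk hkn)

theorem IsLeast.le_of_forall_ge_le (hk : IsLeast {j | IsMaxIndex n v j} k) {j : ℕ}
    (hj : 1 ≤ j) (hjn : j ≤ n) (htail : ∀ i, j ≤ i → i ≤ n → v i ≤ v j) : k ≤ j := by
  by_contra! hjk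
  have hkj : v k ≤ v j := htail k hjk.le hk.1.2.1
  exact hjk.not_ge (hk.2 ⟨hj, hjn, fun i hi hin => (hk.1.2.2 i hi hin).trans hkj⟩)

end MaxIndex

theorem minimax_index_antitone_general (n : ℕ) (f : ℕ → ℝ → ℝ)
    (hpos : ∀ i, 1 ≤ i → i ≤ n → ∀ t : ℝ, 0 ≤ t → 0 < f i t)
    (hcont : ∀ i, 1 ≤ i → i ≤ n → ContinuousOn (f i) (Set.Ici (0:ℝ)))
    (hratio : ∀ i, 1 ≤ i → i + 1 ≤ n →
      MonotoneOn (fun t => f i t / f (i + 1) t) (Set.Ici (0:ℝ)))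
    (K : ℝ → ℕ)
    (hK : ∀ t : ℝ, 0 ≤ t →
      IsLeast {j : ℕ | 1 ≤ j ∧ j ≤ n ∧ ∀ i, 1 ≤ i → i ≤ n → f i t ≤ f j t} (K t)) :
    AntitoneOn K (Set.Ici (0:ℝ)) ∧
      ∀ t : ℝ, 0 ≤ t → ∃ ε > (0:ℝ), ∀ s : ℝ, t ≤ s → s < t + ε → K s = K t := by
  have hK' : ∀ t ∈ Ici (0:ℝ), IsLeast {j | IsMaxIndex n (f · t) j} (K t) := hK
  refine ⟨fun s hs t ht hst => ?_, fun t ht => ?_⟩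
  · obtain ⟨hKs, hKsn, hKs_max⟩ := (hK' s hs).1
    exact (hK' t ht).le_of_forall_ge_le hKs hKsn
      (tail_le_of_tail_le_of_le hpos hratio hKs hs ht hst fun i hi hin =>
        hKs_max i (hKs.trans hi) hin)
  · have hKt := hK' t ht
    obtain ⟨hk, hkn, hk_max⟩ := hKt.1
    have hbelow : ∀ᶠ s in 𝓝[≥] t, ∀ i ∈ Finset.Ico 1 (K t), f i s < f (K t) s := by
      refine (eventually_all_finset _).mpr fun i hi => ?_
      obtain ⟨hi1, hik⟩ := Finset.mem_Ico.mp hi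
      exact ((hcont i hi1 (by omega) t ht).mono (Ici_subset_Ici.mpr ht)).tendsto.eventually_lt
        ((hcont _ hk hkn t ht).mono (Ici_subset_Ici.mpr ht)).tendsto (hKt.lt_of_isMaxIndex hi1 hik)
    obtain ⟨u, htu, hsub⟩ := mem_nhdsGE_iff_exists_Ico_subset.mp hbelow
    refine ⟨u - t, sub_pos.mpr htu, fun s hts hsu => ?_⟩
    have hs : s ∈ Ici (0:ℝ) := ht.trans hts
    exact (hK' s hs).unique (isLeast_isMaxIndex_of_lt_of_le hk hkn
      (fun i hi hik => hsub ⟨hts, by linarith⟩ i (Finset.mem_Ico.mpr ⟨hi, hik⟩))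
      (tail_le_of_tail_le_of_le hpos hratio hk ht hs hts fun i hi hin =>
        hk_max i (hk.trans hi) hin))

/-- Lemma 5.1: given positive continuous functions `f(i,·)`, `i = 1,…,n`, on `[0,∞)`
such that `f(i,t)/f(i+1,t)` is non-decreasing in `t` for `i = 1,…,n-1`, the index
`K(t) = min{ j ∈ {1,…,n} : f(j,t) = max_i f(i,t) }` is non-increasing and right
continuous in `t`. -/
theorem minimax_index_antitone (n : ℕ) (hn : 1 ≤ n) (f : ℕ → ℝ → ℝ)
    (hpos : ∀ i, 1 ≤ i → i ≤ n → ∀ t : ℝ, 0 ≤ t → 0 < f i t)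
    (hcont : ∀ i, 1 ≤ i → i ≤ n → ContinuousOn (f i) (Set.Ici (0:ℝ)))
    (hratio : ∀ i, 1 ≤ i → i + 1 ≤ n →
      MonotoneOn (fun t => f i t / f (i + 1) t) (Set.Ici (0:ℝ)))
    (K : ℝ → ℕ)
    (hK : ∀ t : ℝ, 0 ≤ t →
      IsLeast {j : ℕ | 1 ≤ j ∧ j ≤ n ∧ ∀ i, 1 ≤ i → i ≤ n → f i t ≤ f j t} (K t)) :
    AntitoneOn K (Set.Ici (0:ℝ)) ∧
      ∀ t : ℝ, 0 ≤ t → ∃ ε > (0:ℝ), ∀ s : ℝ, t ≤ s → s < t + ε → K s = K t :=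
  minimax_index_antitone_general n f hpos hcont hratio K hK
end
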